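/- arXiv:1909.11149 — 5 statements merged into one kernel-verified Lean document; each statement's English description precedes it below -/
import Mathlib

section
/- If a > 1 and −∞ < b < c < ∞ are real numbers, then the binary relation {(x, y) ∈ ℝ² | y = a^x ∧ b ≤ x ≤ c} (with a^x the real power Real.rpow) is not semialgebraic over ℝ. -/
/-- A set `s ⊆ ℝ^n` is semialgebraic over `ℝ` if it is a finite union of finite
intersections of sets of the form `{x | p(x) = 0}` and `{x | p(x) > 0}`, where `p`
ranges over polynomials in `n` variables with real coefficients. -/
def IsSemialgebraicReal {n : ℕ} (s : Set (Fin n → ℝ)) : Prop :=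
  ∃ (k m : ℕ) (p : Fin k → Fin m → MvPolynomial (Fin n) ℝ) (isEq : Fin k → Fin m → Bool),
    s = ⋃ i, ⋂ j,
      if isEq i j then {x | MvPolynomial.eval x (p i j) = 0}
      else {x | 0 < MvPolynomial.eval x (p i j)}

/-!
Write the set as a finite union of basic semialgebraic sets. One of them contains the points
`(x, exp (t x))`, `t = log a > 0`, for infinitely many `x ∈ [b, c]`. If one of its equations
`p = 0` is nontrivial, the real-analytic function `x ↦ p (x, exp (t x))` has infinitely many
zeros in a compact interval, hence vanishes identically; this is impossible for `p ≠ 0`, because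
the functions `x ^ i * exp (j t x)` have pairwise distinct growth rates. Otherwise the basic set
is open, and a nonempty open set cannot lie inside the graph of a function.
-/

open Filter Real Set Topology

theorem tendsto_rpow_mul_exp_mul_atTop_nhds_zero {s d : ℝ} (h : d < 0 ∨ d = 0 ∧ s < 0) :
    Tendsto (fun x : ℝ => x ^ s * exp (d * x)) atTop (𝓝 0) := by
  rcases h with hd | ⟨rfl, hs⟩
  · simpa using tendsto_rpow_mul_exp_neg_mul_atTop_nhds_zero s (-d) (neg_pos.2 hd)
  · simpa using tendsto_rpow_neg_atTop (neg_pos.2 hs)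

namespace MvPolynomial

/-- Dividing by the monomial `x ^ μ₀ * exp (t x) ^ μ₁` that is largest for the lexicographic order
on `(μ₁, μ₀)`, every other monomial of `q (x, exp (t x))` tends to `0` as `x → ∞`. -/
theorem eq_zero_of_forall_eval_vec_exp_mul_eq_zero {t : ℝ} (ht : 0 < t)
    {q : MvPolynomial (Fin 2) ℝ} (h : ∀ x, eval ![x, exp (t * x)] q = 0) : q = 0 := by
  by_contra hq
  obtain ⟨μ, hμ, hmax⟩ :=
    q.support.exists_max_image (fun m => toLex (m 1, m 0)) (support_nonempty.2 hq)
  set f : (Fin 2 →₀ ℕ) → ℝ → ℝ := fun m x =>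
    q.coeff m * (x ^ ((m 0 : ℝ) - μ 0) * exp (t * ((m 1 : ℝ) - μ 1) * x))
  have hlim : ∀ m ∈ q.support, Tendsto (f m) atTop (𝓝 (if μ = m then q.coeff μ else 0)) := by
    intro m hm
    by_cases hmμ : μ = m
    · subst hmμ
      simp [f]
    have hlt : toLex (m 1, m 0) < toLex (μ 1, μ 0) :=
      (hmax m hm).lt_of_ne fun he => hmμ <| by
        simp only [toLex_inj, Prod.mk.injEq] at he
        ext i; fin_cases i <;> simp [he]
    rw [Prod.Lex.toLex_lt_toLex] at hlt
    have hdecay := tendsto_rpow_mul_exp_mul_atTop_nhds_zero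
      (s := (m 0 : ℝ) - μ 0) (d := t * ((m 1 : ℝ) - μ 1)) <| by
        rcases hlt with hlt | ⟨heq, hlt⟩
        · exact Or.inl (mul_neg_of_pos_of_neg ht (by simpa using hlt))
        · exact Or.inr ⟨by simp_all, by simpa using hlt⟩
    simpa [f, hmμ] using hdecay.const_mul (q.coeff m)
  have hsum_eq : ∀ x > 0, ∑ m ∈ q.support, f m x = 0 := by
    intro x hx
    have hterm : ∀ m, f m x = q.coeff m * (x ^ m 0 * exp (t * x) ^ m 1) /
        (x ^ μ 0 * exp (t * x) ^ μ 1) := by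
      intro m
      simp only [f, rpow_sub hx, rpow_natCast, ← exp_nat_mul, mul_sub, sub_mul, exp_sub]
      field_simp
    have hq0 : ∑ m ∈ q.support, q.coeff m * (x ^ m 0 * exp (t * x) ^ m 1) = 0 := by
      simpa [eval_eq', Fin.prod_univ_two] using h x
    simp only [hterm, ← Finset.sum_div, hq0, zero_div]
  have hlim_sum := tendsto_finsetSum q.support hlim
  rw [Finset.sum_ite_eq, if_pos hμ] at hlim_sum
  have hzero : Tendsto (fun x => ∑ m ∈ q.support, f m x) atTop (𝓝 0) :=
    tendsto_const_nhds.congr' <| (eventually_gt_atTop 0).mono fun x hx => (hsum_eq x hx).symm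
  exact mem_support_iff.1 hμ (tendsto_nhds_unique hlim_sum hzero)

theorem analyticOnNhd_eval_vec_exp_mul (t : ℝ) (q : MvPolynomial (Fin 2) ℝ) :
    AnalyticOnNhd ℝ (fun x => eval ![x, exp (t * x)] q) univ := by
  have hcoord : ∀ i, AnalyticOnNhd ℝ (fun x : ℝ => ![x, exp (t * x)] i) univ := by
    intro i
    fin_cases i
    · exact analyticOnNhd_id
    · exact analyticOnNhd_rexp.comp (analyticOnNhd_const.mul analyticOnNhd_id) (mapsTo_univ _ _)
  simpa [coe_aeval_eq_eval] using AnalyticOnNhd.aeval_mvPolynomial hcoord q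

theorem eq_zero_of_eval_vec_exp_mul_eq_zero_on {t : ℝ} (ht : 0 < t)
    {q : MvPolynomial (Fin 2) ℝ} {D : Set ℝ} (hD : D.Infinite) (hDb : Bornology.IsBounded D)
    (h : ∀ x ∈ D, eval ![x, exp (t * x)] q = 0) : q = 0 := by
  obtain ⟨x₀, -, hacc⟩ := hD.exists_accPt_of_subset_isCompact hDb.isCompact_closure subset_closure
  have hfreq : ∃ᶠ x in 𝓝[≠] x₀, eval ![x, exp (t * x)] q = 0 :=
    (accPt_iff_frequently_nhdsNE.1 hacc).mono h
  refine eq_zero_of_forall_eval_vec_exp_mul_eq_zero ht fun x => ?_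
  exact (analyticOnNhd_eval_vec_exp_mul t q).eqOn_zero_of_preconnected_of_frequently_eq_zero
    isPreconnected_univ (mem_univ x₀) hfreq (mem_univ x)

end MvPolynomial

theorem interior_graph_eq_empty (f : ℝ → ℝ) :
    interior {v : Fin 2 → ℝ | v 1 = f (v 0)} = ∅ := by
  refine eq_empty_iff_forall_notMem.2 fun v hv => ?_
  have hline : Continuous (Function.update v 1) := continuous_const.update 1 continuous_id
  have hsub : Function.update v 1 ⁻¹' interior {v : Fin 2 → ℝ | v 1 = f (v 0)} ⊆ {f (v 0)} :=
    fun s hs => by simpa using interior_subset hs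
  have : v 1 ∈ interior {f (v 0)} :=
    interior_maximal hsub (isOpen_interior.preimage hline) (by simpa using hv)
  simp [interior_singleton] at this

def basicSemialgebraicSet {n m : ℕ} (p : Fin m → MvPolynomial (Fin n) ℝ) (isEq : Fin m → Bool) :
    Set (Fin n → ℝ) :=
  ⋂ j, if isEq j then {x | MvPolynomial.eval x (p j) = 0} else {x | 0 < MvPolynomial.eval x (p j)}

theorem isOpen_basicSemialgebraicSet {n m : ℕ} {p : Fin m → MvPolynomial (Fin n) ℝ}
    {isEq : Fin m → Bool} (h : ∀ j, isEq j = true → p j = 0) :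
    IsOpen (basicSemialgebraicSet p isEq) := by
  refine isOpen_iInter_of_finite fun j => ?_
  cases hj : isEq j
  · exact isOpen_lt continuous_const (MvPolynomial.continuous_eval _)
  · simp [h j hj]

theorem exists_eq_ne_zero_of_basicSemialgebraicSet_subset_graph {m : ℕ}
    {p : Fin m → MvPolynomial (Fin 2) ℝ} {isEq : Fin m → Bool} {f : ℝ → ℝ}
    (hne : (basicSemialgebraicSet p isEq).Nonempty)
    (hsub : basicSemialgebraicSet p isEq ⊆ {v | v 1 = f (v 0)}) :
    ∃ j, isEq j = true ∧ p j ≠ 0 := by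
  by_contra! h
  have := interior_maximal hsub (isOpen_basicSemialgebraicSet h)
  rw [interior_graph_eq_empty] at this
  exact hne.ne_empty (subset_empty_iff.1 this)

/-- If `a > 1` and `b < c`, then `{(x, y) ∈ ℝ² | y = a^x ∧ b ≤ x ≤ c}` is not
semialgebraic over `ℝ`. -/
theorem rpow_graph_not_semialgebraic (a b c : ℝ) (ha : 1 < a) (hbc : b < c) :
    ¬ IsSemialgebraicReal
        {v : Fin 2 → ℝ | v 1 = Real.rpow a (v 0) ∧ b ≤ v 0 ∧ v 0 ≤ c} := by
  rintro ⟨k, m, p, isEq, hS⟩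
  replace hS : _ = ⋃ i, basicSemialgebraicSet (p i) (isEq i) := hS
  have hrpow : ∀ x, Real.rpow a x = exp (log a * x) := rpow_def_of_pos (by linarith)
  set g : ℝ → Fin 2 → ℝ := fun x => ![x, exp (log a * x)]
  have hgS : ∀ x ∈ Icc b c, g x ∈ ⋃ i, basicSemialgebraicSet (p i) (isEq i) :=
    fun x hx => hS ▸ ⟨(hrpow x).symm, hx⟩
  have hcell : ∀ i, basicSemialgebraicSet (p i) (isEq i) ⊆ {v | v 1 = exp (log a * v 0)} :=
    fun i v hv => ((hS ▸ mem_iUnion_of_mem i hv).1 : v 1 = _).trans (hrpow _)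
  obtain ⟨i, hi⟩ : ∃ i, {x ∈ Icc b c | g x ∈ basicSemialgebraicSet (p i) (isEq i)}.Infinite := by
    by_contra! hfinite
    refine Icc_infinite hbc ((finite_iUnion hfinite).subset fun x hx => ?_)
    obtain ⟨i, hxi⟩ := mem_iUnion.1 (hgS x hx)
    exact mem_iUnion.2 ⟨i, hx, hxi⟩
  obtain ⟨x, hx⟩ := hi.nonempty
  obtain ⟨j, hj, hpj⟩ := exists_eq_ne_zero_of_basicSemialgebraicSet_subset_graph
    (f := (exp <| log a * ·)) ⟨g x, hx.2⟩ (hcell i)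
  refine hpj (MvPolynomial.eq_zero_of_eval_vec_exp_mul_eq_zero_on (log_pos ha) hi
    ((Metric.isBounded_Icc b c).subset (sep_subset _ _)) fun y hy => ?_)
  simpa [hj] using mem_iInter.1 hy.2 j
end

section
/- Let a, b, c be real numbers with a > 1 and b < c. There is no nonzero polynomial p in two variables with real coefficients (p : MvPolynomial (Fin 2) ℝ, p ≠ 0) such that p(x, a^x) = 0 for all x ∈ [b, c]; that is, the function x ↦ a^x (Real.rpow) is not algebraic on any nondegenerate interval. -/
/-!
Write `a ^ x = exp (t * x)` with `t = log a > 0`. The function `x ↦ p(x, exp (t * x))` is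
real analytic, so if it vanishes on `[b, c]` it vanishes on all of `ℝ`. Viewing `p` as a
polynomial `∑ qⱼ(X) Yʲ` of `Y`-degree `n` and dividing by `exp (n * t * x)`, the leading
coefficient `qₙ(x)` becomes a combination of the terms `qⱼ(x) / exp ((n - j) * t * x)`, `j < n`,
which tend to `0` as `x → ∞` because exponentials beat polynomials. A polynomial tending to `0`
at `∞` is zero, so `qₙ = 0`, which is absurd unless `p = 0`.
-/

open Filter Real Polynomial Topology
open scoped Polynomial.Bivariate

namespace Polynomial

theorem tendsto_eval_div_exp_mul_atTop (q : ℝ[X]) {s : ℝ} (hs : 0 < s) :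
    Tendsto (fun x => q.eval x / exp (s * x)) atTop (𝓝 0) := by
  have hq : q.eval =O[atTop] fun x => (X ^ q.natDegree : ℝ[X]).eval x :=
    isBigO_atTop_of_degree_le _ _ (by rw [degree_X_pow]; exact degree_le_natDegree)
  simp only [eval_pow, eval_X] at hq
  exact (hq.trans_isLittleO (isLittleO_pow_exp_pos_mul_atTop _ hs)).tendsto_div_nhds_zero

theorem evalEval_eq_sum_range {R : Type*} [CommSemiring R] (P : R[X][Y]) (x y : R) :
    P.evalEval x y = ∑ j ∈ Finset.range (P.natDegree + 1), (P.coeff j).eval x * y ^ j := by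
  simp [evalEval, eval_eq_sum_range (p := P), eval_finsetSum]

theorem eq_zero_of_evalEval_exp_mul {t : ℝ} (ht : 0 < t) (P : ℝ[X][Y])
    (h : ∀ x, P.evalEval x (exp (t * x)) = 0) : P = 0 := by
  by_contra hP
  set n := P.natDegree
  have hlower : ∀ j < n, Tendsto (fun x => (P.coeff j).eval x * exp (t * x) ^ j / exp (t * x) ^ n)
      atTop (𝓝 0) := by
    intro j hj
    have hs : 0 < ((n : ℝ) - j) * t := mul_pos (sub_pos.2 (by exact_mod_cast hj)) ht
    refine ((P.coeff j).tendsto_eval_div_exp_mul_atTop hs).congr fun x => ?_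
    rw [← exp_nat_mul, ← exp_nat_mul, mul_div_assoc, ← exp_sub, div_eq_mul_inv, ← exp_neg]
    ring_nf
  have hlead : ∀ x, P.leadingCoeff.eval x =
      -∑ j ∈ Finset.range n, (P.coeff j).eval x * exp (t * x) ^ j / exp (t * x) ^ n := by
    intro x
    have hsum := h x
    rw [evalEval_eq_sum_range, Finset.sum_range_succ] at hsum
    have hne : exp (t * x) ^ n ≠ 0 := by positivity
    rw [← Finset.sum_div]
    field_simp
    rw [leadingCoeff]
    linear_combination hsum
  have hlim : Tendsto (fun x => P.leadingCoeff.eval x) atTop (𝓝 0) := by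
    simpa [hlead] using (tendsto_finsetSum _ fun j hj => hlower j (Finset.mem_range.1 hj)).neg
  exact hP (leadingCoeff_eq_zero.1 (leadingCoeff_eq_zero.1 ((tendsto_nhds_iff _).1 hlim).1))

end Polynomial

namespace MvPolynomial

noncomputable def toBivariate {R : Type*} [CommSemiring R] :
    MvPolynomial (Fin 2) R →ₐ[R] R[X][Y] :=
  aeval ![Polynomial.C Polynomial.X, Polynomial.X]

theorem evalEval_toBivariate {R : Type*} [CommSemiring R] (p : MvPolynomial (Fin 2) R) (x y : R) :
    (toBivariate p).evalEval x y = eval ![x, y] p := by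
  induction p using MvPolynomial.induction_on with
  | C r => simp [toBivariate]
  | add p q hp hq => simp [hp, hq]
  | mul_X p i hp => fin_cases i <;> simp [toBivariate, ← hp, evalEval_C]

theorem eq_zero_of_eval_exp_mul {t : ℝ} (ht : 0 < t) (p : MvPolynomial (Fin 2) ℝ)
    (h : ∀ x, eval ![x, exp (t * x)] p = 0) : p = 0 := by
  have hP : toBivariate p = 0 := Polynomial.eq_zero_of_evalEval_exp_mul ht _ fun x =>
    (evalEval_toBivariate p _ _).trans (h x)
  refine MvPolynomial.funext fun v => ?_
  have hv : v = ![v 0, v 1] := by ext i; fin_cases i <;> rfl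
  rw [map_zero, hv, ← evalEval_toBivariate, hP, evalEval_zero]

end MvPolynomial

theorem AnalyticOnNhd.eq_zero_of_eqOn_Icc {E : Type*} [NormedAddCommGroup E] [NormedSpace ℝ E]
    {f : ℝ → E} (hf : AnalyticOnNhd ℝ f Set.univ) {b c : ℝ} (hbc : b < c)
    (h : Set.EqOn f 0 (Set.Icc b c)) : f = 0 := by
  have hmid : Set.Icc b c ∈ 𝓝 ((b + c) / 2) := Icc_mem_nhds (by linarith) (by linarith)
  exact hf.eq_of_eventuallyEq analyticOnNhd_const (Filter.mem_of_superset hmid h)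

/-- For real `a > 1` and `b < c`, there is no nonzero two-variable real polynomial `p`
with `p(x, a^x) = 0` for all `x ∈ [b, c]`: the function `x ↦ a^x` is not algebraic on
any nondegenerate interval. -/
theorem rpow_not_algebraic_on_interval (a b c : ℝ) (ha : 1 < a) (hbc : b < c) :
    ¬ ∃ p : MvPolynomial (Fin 2) ℝ, p ≠ 0 ∧
        ∀ x ∈ Set.Icc b c, MvPolynomial.eval ![x, Real.rpow a x] p = 0 := by
  rintro ⟨p, hp, hvan⟩
  set t := log a
  have hcoord : ∀ i, AnalyticOnNhd ℝ (fun x => ![x, exp (t * x)] i) Set.univ := by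
    intro i
    fin_cases i
    · exact analyticOnNhd_id
    · exact (analyticOnNhd_const.mul analyticOnNhd_id).rexp
  have hF : AnalyticOnNhd ℝ (fun x => MvPolynomial.eval ![x, exp (t * x)] p) Set.univ :=
    AnalyticOnNhd.aeval_mvPolynomial hcoord p
  have hvan_exp : Set.EqOn (fun x => MvPolynomial.eval ![x, exp (t * x)] p) 0 (Set.Icc b c) :=
    fun x hx => by simpa [rpow_def_of_pos (zero_lt_one.trans ha)] using hvan x hx
  exact hp (MvPolynomial.eq_zero_of_eval_exp_mul (log_pos ha) p
    (congrFun (hF.eq_zero_of_eqOn_Icc hbc hvan_exp)))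
end

section
/- Let L be a nonzero complex number and let p be a polynomial in two variables with complex coefficients (p : MvPolynomial (Fin 2) ℂ). If p(z, exp(L·z)) = 0 for every complex number z, then p = 0. (In particular this applies with L = log a for a real a > 1.) -/
open Complex Polynomial

lemma eval_aeval_poly (z : ℂ) (g : Fin 2 → Polynomial ℂ) (p : MvPolynomial (Fin 2) ℂ) :
    Polynomial.eval z (MvPolynomial.aeval g p) = MvPolynomial.eval (fun i => (g i).eval z) p := by
  rw [MvPolynomial.aeval_def, ← Polynomial.coe_evalRingHom, MvPolynomial.eval₂_comp_left]
  have : (Polynomial.evalRingHom z).comp (algebraMap ℂ (Polynomial ℂ)) = RingHom.id ℂ := by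
    ext a; simp
  rw [this]; rfl

/-- If `L ≠ 0` is a complex number and `p` is a two-variable complex polynomial with
`p(z, exp (L·z)) = 0` for every complex `z`, then `p = 0`. -/
theorem polynomial_vanishing_on_exp_graph (L : ℂ) (hL : L ≠ 0)
    (p : MvPolynomial (Fin 2) ℂ)
    (h : ∀ z : ℂ, MvPolynomial.eval ![z, Complex.exp (L * z)] p = 0) :
    p = 0 := by
  -- Step 1: p(z, c) = 0 for all z and all c ≠ 0.
  have h1 : ∀ c : ℂ, c ≠ 0 → ∀ z : ℂ, MvPolynomial.eval ![z, c] p = 0 := by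
    intro c hc z
    set Q : Polynomial ℂ := MvPolynomial.aeval ![Polynomial.X, Polynomial.C c] p with hQ
    have hQev : ∀ w : ℂ, Q.eval w = MvPolynomial.eval ![w, c] p := by
      intro w
      rw [hQ, eval_aeval_poly]
      have : (fun i => Polynomial.eval w (![Polynomial.X, Polynomial.C c] i)) = ![w, c] := by
        funext i; fin_cases i <;> simp
      rw [this]
    have hd : (2 * Real.pi * Complex.I) / L ≠ 0 := by
      apply div_ne_zero _ hL
      simp [Real.pi_ne_zero, Complex.I_ne_zero]
    have hroot : ∀ n : ℕ, Q.IsRoot (Complex.log c / L + n * ((2 * Real.pi * Complex.I) / L)) := by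
      intro n
      have key : Complex.exp (L * (Complex.log c / L + n * ((2 * Real.pi * Complex.I) / L))) = c := by
        rw [mul_add, mul_div_cancel₀ _ hL]
        rw [show L * (↑n * (2 * ↑Real.pi * Complex.I / L)) = ↑n * (2 * ↑Real.pi * Complex.I) by
          field_simp]
        rw [Complex.exp_add, Complex.exp_log hc]
        rw [Complex.exp_nat_mul]
        simp [Complex.exp_two_pi_mul_I]
      have := h (Complex.log c / L + n * ((2 * Real.pi * Complex.I) / L))
      rw [key] at this
      simpa [Polynomial.IsRoot, hQev] using this
    have hQ0 : Q = 0 := by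
      apply Polynomial.eq_zero_of_infinite_isRoot
      have hinj : Function.Injective
          (fun n : ℕ => Complex.log c / L + n * ((2 * Real.pi * Complex.I) / L)) := by
        intro m n hmn
        simp only [add_right_inj] at hmn
        have := mul_right_cancel₀ hd hmn
        exact_mod_cast this
      exact Set.infinite_of_injective_forall_mem hinj hroot
    have := hQev z
    rw [hQ0] at this
    simpa using this.symm
  -- Step 2: p(z, w) = 0 for all z, w.
  have h2 : ∀ z w : ℂ, MvPolynomial.eval ![z, w] p = 0 := by
    intro z w
    set R : Polynomial ℂ := MvPolynomial.aeval ![Polynomial.C z, Polynomial.X] p with hR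
    have hRev : ∀ u : ℂ, R.eval u = MvPolynomial.eval ![z, u] p := by
      intro u
      rw [hR, eval_aeval_poly]
      have : (fun i => Polynomial.eval u (![Polynomial.C z, Polynomial.X] i)) = ![z, u] := by
        funext i; fin_cases i <;> simp
      rw [this]
    have hR0 : R = 0 := by
      apply Polynomial.eq_zero_of_infinite_isRoot
      apply Set.Infinite.mono (s := {u : ℂ | u ≠ 0})
      · intro u hu
        simpa [Polynomial.IsRoot, hRev] using h1 u hu z
      · exact (Set.finite_singleton (0 : ℂ)).infinite_compl
    have := hRev w
    rw [hR0] at this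
    simpa using this.symm
  apply MvPolynomial.funext
  intro x
  have hx : x = ![x 0, x 1] := by
    funext i; fin_cases i <;> rfl
  rw [hx]
  simpa using h2 (x 0) (x 1)
end

section
/- Let 𝔅 be the smallest collection of subsets of ℝ containing the set {x ∈ ℝ | p(x) > 0} for every polynomial p with real coefficients and closed under complementation and finite (binary) unions — i.e., the Boolean subalgebra of Set ℝ generated by the polynomial positivity sets. Then for every A ∈ 𝔅 there exists a ∈ ℝ such that either the ray (a, ∞) is contained in A, or (a, ∞) is disjoint from A. -/
/-- The smallest collection of subsets of `ℝ` containing every polynomial positivity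
set `{x | p(x) > 0}` and closed under complementation and binary unions: the Boolean
subalgebra of `Set ℝ` generated by the polynomial positivity sets. -/
inductive PolyPosGen : Set ℝ → Prop
  | basic (p : Polynomial ℝ) : PolyPosGen {x : ℝ | 0 < p.eval x}
  | compl {A : Set ℝ} : PolyPosGen A → PolyPosGen Aᶜ
  | union {A B : Set ℝ} : PolyPosGen A → PolyPosGen B → PolyPosGen (A ∪ B)

open Filter in
private lemma polyPosGen_eventually (A : Set ℝ) (hA : PolyPosGen A) :
    (∀ᶠ x in atTop, x ∈ A) ∨ (∀ᶠ x in atTop, x ∉ A) := by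
  induction hA with
  | basic p =>
    rcases le_or_gt p.degree 0 with hd | hd
    · have hp := Polynomial.eq_C_of_degree_le_zero hd
      by_cases hc : 0 < p.coeff 0
      · exact Or.inl (Eventually.of_forall fun x => by rw [Set.mem_setOf_eq, hp]; simpa using hc)
      · exact Or.inr (Eventually.of_forall fun x => by rw [Set.mem_setOf_eq, hp]; simpa using hc)
    · rcases le_or_gt 0 p.leadingCoeff with hl | hl
      · left
        exact (p.tendsto_atTop_of_leadingCoeff_nonneg hd hl).eventually_gt_atTop 0
      · right
        filter_upwards [(p.tendsto_atBot_of_leadingCoeff_nonpos hd hl.le).eventually_lt_atBot 0]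
          with x hx
        simpa using hx.le
  | compl h ih => rcases ih with h1 | h1
                  · exact Or.inr (h1.mono fun x hx => by simpa using hx)
                  · exact Or.inl (h1.mono fun x hx => hx)
  | union hA hB ihA ihB =>
    rcases ihA with h1 | h1
    · exact Or.inl (h1.mono fun x hx => Or.inl hx)
    · rcases ihB with h2 | h2
      · exact Or.inl (h2.mono fun x hx => Or.inr hx)
      · right
        filter_upwards [h1, h2] with x hx1 hx2 hx
        exact hx.elim hx1 hx2

/-- Every set in the Boolean algebra generated by polynomial positivity sets either
contains a ray `(a, ∞)` or is disjoint from such a ray. -/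
theorem polyPosGen_ray_dichotomy (A : Set ℝ) (hA : PolyPosGen A) :
    ∃ a : ℝ, Set.Ioi a ⊆ A ∨ Set.Ioi a ∩ A = ∅ := by
  rcases polyPosGen_eventually A hA with h | h
  · rcases Filter.eventually_atTop.1 h with ⟨a, ha⟩
    exact ⟨a, Or.inl fun x hx => ha x hx.le⟩
  · rcases Filter.eventually_atTop.1 h with ⟨a, ha⟩
    refine ⟨a, Or.inr (Set.eq_empty_iff_forall_notMem.2 fun x ⟨hx1, hx2⟩ => ha x hx1.le hx2)⟩
end

section
/- Define W₂ : ℝ × ℝ → ℝ by W₂(x, y) = ∑_{n≥1} ( D(n, x)·10^{−(2n−1)} + D(n, y)·10^{−2n} ), i.e., the real number obtained by interweaving the decimal digits of x and y. Then W₂ is injective on (0,1) × (0,1): for x₁, y₁, x₂, y₂ ∈ (0,1), if W₂(x₁, y₁) = W₂(x₂, y₂) then x₁ = x₂ and y₁ = y₂. -/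
/-!
Read `W₂ x y` in base `100`: its `n`-th digit is `10 · D(n, x) + D(n, y)`. For any base `b`, the
digits `⌊b · fract (b ^ n · x)⌋` of `x` sum to `fract x` and are not eventually `b - 1` (that tail
would sum to `1 > fract (b ^ N · x)`). Conversely a digit sequence that is not eventually `b - 1`
is the digit sequence of its own sum: its sum lies in `[0, 1)`, so the first digit is read off by
the floor, and multiplying by `b` and subtracting that digit shifts the sequence by one. So
`W₂ x y` determines every base-`100` digit `10 · D(n, x) + D(n, y)`, hence every decimal digit of
`x` and of `y`, hence `x` and `y`.
-/

/-- `D n x` is the `n`-th decimal digit of `x` (for `n ≥ 1`):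
`D(n, x) = ⌊10 · fract(10^(n−1) · x)⌋`. -/
noncomputable def D (n : ℕ) (x : ℝ) : ℤ :=
  ⌊10 * Int.fract ((10 : ℝ) ^ (n - 1) * x)⌋

/-- `W₂ (x, y) = ∑_{n≥1} (D(n,x)·10^{-(2n-1)} + D(n,y)·10^{-2n})`: the real number
obtained by interweaving the decimal digits of `x` and `y`. -/
noncomputable def W₂ (x y : ℝ) : ℝ :=
  ∑' n : ℕ,
    ((D (n + 1) x : ℝ) * (10 : ℝ) ^ (-(2 * ((n : ℤ) + 1) - 1)) +
      (D (n + 1) y : ℝ) * (10 : ℝ) ^ (-(2 * ((n : ℤ) + 1))))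

open Filter Topology

lemma Filter.Frequently.nat_add_one {p : ℕ → Prop} (h : ∃ᶠ n in atTop, p n) :
    ∃ᶠ n in atTop, p (n + 1) :=
  frequently_map.mp (by rwa [map_add_atTop_eq_nat])

/-- Indexed from `0`, unlike `D`: `digit 10 x n = D (n + 1) x`. -/
noncomputable def digit (b : ℕ) (x : ℝ) (n : ℕ) : ℤ :=
  ⌊(b : ℝ) * Int.fract ((b : ℝ) ^ n * x)⌋

section digit

variable {b : ℕ}

lemma digit_nonneg (x : ℝ) (n : ℕ) : 0 ≤ digit b x n :=
  Int.floor_nonneg.mpr (mul_nonneg b.cast_nonneg (Int.fract_nonneg _))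

lemma digit_lt (hb : 0 < b) (x : ℝ) (n : ℕ) : digit b x n < b := by
  have hb' : (0 : ℝ) < b := by exact_mod_cast hb
  rw [digit, Int.floor_lt]
  push_cast
  nlinarith [Int.fract_lt_one ((b : ℝ) ^ n * x)]

lemma digit_succ (x : ℝ) (n : ℕ) : digit b x (n + 1) = digit b (b * x) n := by
  rw [digit, digit, pow_succ, mul_assoc]

lemma digit_add (x : ℝ) (n N : ℕ) : digit b x (n + N) = digit b ((b : ℝ) ^ N * x) n := by
  rw [digit, digit, pow_add, mul_assoc]

lemma digit_sub_intCast (x : ℝ) (z : ℤ) (n : ℕ) : digit b (x - z) n = digit b x n := by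
  have : (b : ℝ) ^ n * (x - z) = (b : ℝ) ^ n * x - ((b ^ n * z : ℤ) : ℝ) := by push_cast; ring
  rw [digit, digit, this, Int.fract_sub_intCast]

lemma mul_fract_eq_digit_add_fract (x : ℝ) (n : ℕ) :
    (b : ℝ) * Int.fract ((b : ℝ) ^ n * x) = digit b x n + Int.fract ((b : ℝ) ^ (n + 1) * x) := by
  have : (b : ℝ) ^ (n + 1) * x
      = ((b * ⌊(b : ℝ) ^ n * x⌋ : ℤ) : ℝ) + b * Int.fract ((b : ℝ) ^ n * x) := by
    push_cast; rw [Int.fract]; ring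
  rw [this, Int.fract_intCast_add, digit, Int.floor_add_fract]

lemma hasSum_pred_div_pow (hb : 1 < b) : HasSum (fun n => ((b : ℝ) - 1) / b ^ (n + 1)) 1 := by
  have hb' : (1 : ℝ) < b := by exact_mod_cast hb
  have hgeom := (hasSum_geometric_of_lt_one (r := (b : ℝ)⁻¹) (by positivity)
    (inv_lt_one_of_one_lt₀ hb')).mul_left (((b : ℝ) - 1) / b)
  have hb1 : (b : ℝ) - 1 ≠ 0 := by linarith
  have hval : ((b : ℝ) - 1) / b * (1 - (b : ℝ)⁻¹)⁻¹ = 1 := by field_simp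
  rw [hval] at hgeom
  exact hgeom.congr_fun fun n => by rw [pow_succ, inv_pow]; field_simp

lemma hasSum_digit_div_pow (hb : 1 < b) (x : ℝ) :
    HasSum (fun n => (digit b x n : ℝ) / b ^ (n + 1)) (Int.fract x) := by
  have hb' : (1 : ℝ) < b := by exact_mod_cast hb
  set r : ℕ → ℝ := fun n => Int.fract ((b : ℝ) ^ n * x) / b ^ n
  have htelescope : ∀ n, (digit b x n : ℝ) / b ^ (n + 1) = r n - r (n + 1) := by
    intro n
    simp only [r]
    rw [eq_sub_iff_add_eq, ← add_div, ← mul_fract_eq_digit_add_fract, pow_succ]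
    field_simp
  have hr : Tendsto r atTop (𝓝 0) := by
    refine squeeze_zero (fun n => by positivity) (fun n => ?_)
      (tendsto_pow_atTop_nhds_zero_of_lt_one (r := (b : ℝ)⁻¹) (by positivity)
        (inv_lt_one_of_one_lt₀ hb'))
    rw [inv_pow, ← one_div]
    exact div_le_div_of_nonneg_right (Int.fract_lt_one ((b : ℝ) ^ n * x)).le (by positivity)
  rw [hasSum_iff_tendsto_nat_of_nonneg (fun n =>
    div_nonneg (by exact_mod_cast digit_nonneg (b := b) x n) (by positivity))]
  simp only [htelescope, Finset.sum_range_sub']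
  simpa [r] using hr.const_sub (Int.fract x)

lemma frequently_digit_add_one_lt (hb : 1 < b) (x : ℝ) :
    ∃ᶠ n in atTop, digit b x n + 1 < b := by
  rw [frequently_atTop]
  intro N
  by_contra! hall
  have hpred : ∀ n, digit b x (n + N) = b - 1 := fun n =>
    le_antisymm (by have := digit_lt (b := b) (by omega) x (n + N); omega) (by
      have := hall (n + N) (by omega); omega)
  have htail := hasSum_digit_div_pow hb ((b : ℝ) ^ N * x)
  simp only [← digit_add, hpred] at htail
  push_cast at htail
  exact (Int.fract_lt_one _).ne (htail.unique (hasSum_pred_div_pow hb))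

lemma eq_of_digit_eq (hb : 1 < b) {x x' : ℝ} (hx : x ∈ Set.Ico 0 1) (hx' : x' ∈ Set.Ico 0 1)
    (h : ∀ n, digit b x n = digit b x' n) : x = x' := by
  rw [← Int.fract_eq_self.mpr hx, ← Int.fract_eq_self.mpr hx']
  exact (hasSum_digit_div_pow hb x).unique (by simpa only [h] using hasSum_digit_div_pow hb x')

variable {c : ℕ → ℤ} {s : ℝ}

lemma div_pow_le_pred_div_pow {n : ℕ} (hcb : c n < b) :
    (c n : ℝ) / b ^ (n + 1) ≤ ((b : ℝ) - 1) / b ^ (n + 1) := by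
  have h : (c n : ℝ) + 1 ≤ b := by exact_mod_cast Int.add_one_le_iff.mpr hcb
  exact div_le_div_of_nonneg_right (by linarith) (by positivity)

lemma summable_div_pow (hb : 1 < b) (hc0 : ∀ n, 0 ≤ c n) (hcb : ∀ n, c n < b) :
    Summable (fun n => (c n : ℝ) / b ^ (n + 1)) :=
  (hasSum_pred_div_pow hb).summable.of_nonneg_of_le
    (fun n => div_nonneg (by exact_mod_cast hc0 n) (by positivity))
    (fun n => div_pow_le_pred_div_pow (hcb n))

lemma mem_Ico_of_hasSum_div_pow (hb : 1 < b) (hc0 : ∀ n, 0 ≤ c n) (hcb : ∀ n, c n < b)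
    (hc : ∃ n, c n + 1 < b) (hs : HasSum (fun n => (c n : ℝ) / b ^ (n + 1)) s) :
    s ∈ Set.Ico 0 1 := by
  obtain ⟨i, hi⟩ := hc
  refine ⟨hasSum_le (fun n => div_nonneg (by exact_mod_cast hc0 n) (by positivity)) hasSum_zero hs,
    hasSum_lt (i := i) (fun n => div_pow_le_pred_div_pow (hcb n)) ?_ hs (hasSum_pred_div_pow hb)⟩
  have h : (c i : ℝ) + 1 < b := by exact_mod_cast hi
  exact div_lt_div_of_pos_right (by linarith) (by positivity)

lemma HasSum.div_pow_shift (hb : 0 < b) (hs : HasSum (fun n => (c n : ℝ) / b ^ (n + 1)) s) :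
    HasSum (fun n => (c (n + 1) : ℝ) / b ^ (n + 1)) (b * s - c 0) := by
  have hb' : (b : ℝ) ≠ 0 := by positivity
  have h := ((hasSum_nat_add_iff' 1).mpr hs).mul_left (b : ℝ)
  have hsum : (b : ℝ) * (s - ∑ i ∈ Finset.range 1, (c i : ℝ) / b ^ (i + 1)) = b * s - c 0 := by
    rw [Finset.sum_range_one]; field_simp; ring
  rw [hsum] at h
  exact h.congr_fun fun n => by field_simp; ring

lemma digit_eq_of_hasSum (hb : 1 < b) (hc0 : ∀ n, 0 ≤ c n) (hcb : ∀ n, c n < b)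
    (hc : ∃ᶠ n in atTop, c n + 1 < b) (hs : HasSum (fun n => (c n : ℝ) / b ^ (n + 1)) s)
    (N : ℕ) : digit b s N = c N := by
  induction N generalizing c s with
  | zero =>
    obtain ⟨hs0, hs1⟩ := mem_Ico_of_hasSum_div_pow hb hc0 hcb hc.exists hs
    obtain ⟨ht0, ht1⟩ := mem_Ico_of_hasSum_div_pow hb (fun n => hc0 (n + 1))
      (fun n => hcb (n + 1)) hc.nat_add_one.exists (hs.div_pow_shift (by omega))
    rw [digit, pow_zero, one_mul, Int.fract_eq_self.mpr ⟨hs0, hs1⟩, Int.floor_eq_iff]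
    constructor <;> linarith
  | succ N ih =>
    rw [digit_succ, ← digit_sub_intCast _ (c 0)]
    exact ih (fun n => hc0 (n + 1)) (fun n => hcb (n + 1)) hc.nat_add_one
      (hs.div_pow_shift (by omega))

end digit

lemma D_succ (n : ℕ) (x : ℝ) : D (n + 1) x = digit 10 x n := by
  rw [D, digit, Nat.add_sub_cancel, Nat.cast_ofNat]

lemma W₂_eq_tsum (x y : ℝ) :
    W₂ x y = ∑' n, ((10 * digit 10 x n + digit 10 y n : ℤ) : ℝ) / ((100 : ℕ) : ℝ) ^ (n + 1) := by
  refine tsum_congr fun n => ?_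
  have h1 : (10 : ℝ) ^ (-(2 * ((n : ℤ) + 1) - 1)) = 10 / 100 ^ (n + 1) := by
    rw [show -(2 * ((n : ℤ) + 1) - 1) = 1 - ((2 * (n + 1) : ℕ) : ℤ) by push_cast; ring,
      zpow_sub₀ (by norm_num), zpow_one, zpow_natCast, pow_mul]
    norm_num
  have h2 : (10 : ℝ) ^ (-(2 * ((n : ℤ) + 1))) = 1 / 100 ^ (n + 1) := by
    rw [show -(2 * ((n : ℤ) + 1)) = -((2 * (n + 1) : ℕ) : ℤ) by push_cast; ring,
      zpow_neg, zpow_natCast, pow_mul]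
    norm_num
  rw [h1, h2, D_succ, D_succ]
  push_cast
  ring

lemma digit_hundred_W₂ (x y : ℝ) (n : ℕ) :
    digit 100 (W₂ x y) n = 10 * digit 10 x n + digit 10 y n := by
  have hx0 := digit_nonneg (b := 10) x
  have hy0 := digit_nonneg (b := 10) y
  have hx9 := digit_lt (b := 10) (by norm_num) x
  have hy9 := digit_lt (b := 10) (by norm_num) y
  have he0 : ∀ n, 0 ≤ 10 * digit 10 x n + digit 10 y n := fun n => by
    have := hx0 n; have := hy0 n; omega
  have he99 : ∀ n, 10 * digit 10 x n + digit 10 y n < (100 : ℕ) := fun n => by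
    have := hx9 n; have := hy9 n; push_cast at *; omega
  have hfreq : ∃ᶠ n in atTop, 10 * digit 10 x n + digit 10 y n + 1 < (100 : ℕ) :=
    (frequently_digit_add_one_lt (b := 10) (by norm_num) x).mono fun n hn => by
      have := hy9 n; push_cast at *; omega
  rw [W₂_eq_tsum]
  exact digit_eq_of_hasSum (by norm_num) he0 he99 hfreq
    (summable_div_pow (by norm_num) he0 he99).hasSum n

/-- `W₂` is injective on `(0,1) × (0,1)`. -/
theorem W₂_injOn (x₁ y₁ x₂ y₂ : ℝ)
    (hx₁ : x₁ ∈ Set.Ioo (0 : ℝ) 1) (hy₁ : y₁ ∈ Set.Ioo (0 : ℝ) 1)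
    (hx₂ : x₂ ∈ Set.Ioo (0 : ℝ) 1) (hy₂ : y₂ ∈ Set.Ioo (0 : ℝ) 1)
    (h : W₂ x₁ y₁ = W₂ x₂ y₂) : x₁ = x₂ ∧ y₁ = y₂ := by
  have hdigits : ∀ n, digit 10 x₁ n = digit 10 x₂ n ∧ digit 10 y₁ n = digit 10 y₂ n := by
    intro n
    have h100 := congrArg (digit 100 · n) h
    simp only [digit_hundred_W₂] at h100
    have := digit_lt (b := 10) (by norm_num) y₁ n
    have := digit_lt (b := 10) (by norm_num) y₂ n
    have := digit_nonneg (b := 10) y₁ n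
    have := digit_nonneg (b := 10) y₂ n
    omega
  exact ⟨eq_of_digit_eq (by norm_num) (Set.Ioo_subset_Ico_self hx₁)
      (Set.Ioo_subset_Ico_self hx₂) fun n => (hdigits n).1,
    eq_of_digit_eq (by norm_num) (Set.Ioo_subset_Ico_self hy₁)
      (Set.Ioo_subset_Ico_self hy₂) fun n => (hdigits n).2⟩
end
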